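/- Let σ be a permutation of {1,...,n} with cycle decomposition into cycles of lengths i_1,...,i_r, acting on the Boolean lattice 2^[n] by relabeling elements. The fixed-point subposet (2^[n])^σ (sets S with σ(S)=S), ranked by cardinality, has Möbius polynomial M_{(2^[n])^σ}(z) = ∏_{j=1}^r (2 - z^{i_j}). -/

import Mathlib

/-!
A `σ`-invariant set is a union of `σ`-orbits, so the poset is isomorphic to the Boolean lattice
on the set of orbits, ranked by the total size of the chosen orbits. In a Boolean lattice
`μ(A, B) = (-1) ^ |B \ A|`, so for a rank `A ↦ ∑_{a ∈ A} w a` the Möbius polynomial is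
`∑_A ∏_{a ∉ A} (1 - z ^ w a) = ∏_a (2 - z ^ w a)`. The orbit sizes are the cycle lengths of `σ`,
fixed points counting as cycles of length one.
-/

open Finset Polynomial

/-- The Möbius polynomial `M_P(z) = Σ_{p ≤ q} μ(p,q) z^{|q|-|p|}` of a finite poset with a
rank function `rk` (terms with `¬ p ≤ q` vanish since `μ(p,q) = 0` there). -/
noncomputable def mobiusPoly (P : Type*) [PartialOrder P] [Fintype P] [DecidableEq P]
    [LocallyFiniteOrder P] (rk : P → ℕ) : Polynomial ℤ :=
  ∑ p : P, ∑ q : P, IncidenceAlgebra.mu ℤ p q • (X : Polynomial ℤ) ^ (rk q - rk p)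

theorem Finset.sum_Icc_eq_sum_powerset_sdiff {α M : Type*} [DecidableEq α] [AddCommMonoid M]
    {A B : Finset α} (h : A ⊆ B) (f : Finset α → M) :
    ∑ C ∈ Icc A B, f C = ∑ D ∈ (B \ A).powerset, f (A ∪ D) := by
  have hcancel : ∀ D ∈ (B \ A).powerset, (A ∪ D) \ A = D := fun D hD =>
    union_sdiff_cancel_left (disjoint_sdiff.mono_right (mem_powerset.1 hD))
  rw [Icc_eq_image_powerset h, sum_image fun D₁ h₁ D₂ h₂ hD => by
    rw [← hcancel D₁ h₁, ← hcancel D₂ h₂, hD]]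

namespace IncidenceAlgebra

variable {𝕜 α β : Type*}

section PartialOrder

variable [AddCommGroup 𝕜] [One 𝕜] [PartialOrder α] [LocallyFiniteOrder α] [DecidableEq α]

theorem mu_eq_of_sum_Icc (f : α → α → 𝕜)
    (hf : ∀ a b, a ≤ b → ∑ x ∈ Icc a b, f a x = if a = b then 1 else 0) {a b : α}
    (hab : a ≤ b) : mu 𝕜 a b = f a b := by
  induction h : #(Icc a b) using Nat.strong_induction_on generalizing b with
  | _ N ih =>
    obtain rfl | hne := eq_or_ne a b
    · simpa using (hf a a le_rfl).symm
    have hsum := hf a b hab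
    rw [Icc_eq_cons_Ico hab, sum_cons, if_neg hne] at hsum
    rw [mu_eq_neg_sum_Ico_of_ne hne, eq_neg_of_add_eq_zero_left hsum]
    congr 1
    refine sum_congr rfl fun x hx => ?_
    rw [mem_Ico] at hx
    exact ih _ (h ▸ card_lt_card (Icc_ssubset_Icc_right hab le_rfl hx.2)) hx.1 rfl

variable [PartialOrder β] [LocallyFiniteOrder β] [DecidableEq β]

theorem mu_orderIso (e : α ≃o β) (a b : α) : mu 𝕜 (e a) (e b) = mu 𝕜 a b := by
  by_cases hab : a ≤ b
  · refine (mu_eq_of_sum_Icc (fun a b => mu 𝕜 (e a) (e b)) (fun a b _ => ?_) hab).symm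
    calc ∑ x ∈ Icc a b, mu 𝕜 (e a) (e x) = ∑ y ∈ Icc (e a) (e b), mu 𝕜 (e a) y :=
          sum_equiv e.toEquiv (by simp) fun _ _ => rfl
      _ = if a = b then 1 else 0 := by simp [sum_Icc_mu_right]
  · rw [apply_eq_zero_of_not_le hab, apply_eq_zero_of_not_le (by simpa using hab)]

end PartialOrder

theorem mu_finset [Ring 𝕜] [DecidableEq α] {A B : Finset α} (h : A ⊆ B) :
    mu 𝕜 A B = (-1) ^ #(B \ A) := by
  refine mu_eq_of_sum_Icc (fun A B => (-1) ^ #(B \ A)) (fun A B hAB => ?_) h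
  rw [sum_Icc_eq_sum_powerset_sdiff hAB, sum_congr rfl fun D hD => by
    rw [union_sdiff_cancel_left (disjoint_sdiff.mono_right (mem_powerset.1 hD))]]
  have := congrArg (Int.cast : ℤ → 𝕜) (sum_powerset_neg_one_pow_card (x := B \ A))
  push_cast [sdiff_eq_empty_iff_subset, hAB.ge_iff_eq] at this
  exact this

end IncidenceAlgebra

theorem mobiusPoly_orderIso {P Q : Type*} [PartialOrder P] [Fintype P] [DecidableEq P]
    [LocallyFiniteOrder P] [PartialOrder Q] [Fintype Q] [DecidableEq Q] [LocallyFiniteOrder Q]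
    (e : P ≃o Q) (rk : Q → ℕ) : mobiusPoly P (fun p => rk (e p)) = mobiusPoly Q rk :=
  Fintype.sum_equiv e.toEquiv _ _ fun p => Fintype.sum_equiv e.toEquiv _ _ fun q => by
    simp [IncidenceAlgebra.mu_orderIso]

section BooleanLattice

variable {α : Type*} [Fintype α] [DecidableEq α]

theorem sum_mu_smul_X_pow_finset (w : α → ℕ) (A : Finset α) :
    ∑ B : Finset α, IncidenceAlgebra.mu ℤ A B • (X : ℤ[X]) ^ (∑ a ∈ B, w a - ∑ a ∈ A, w a) =
      ∏ a ∈ Aᶜ, (1 - X ^ w a) := by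
  calc _ = ∑ B ∈ Icc A univ,
        IncidenceAlgebra.mu ℤ A B • (X : ℤ[X]) ^ (∑ a ∈ B, w a - ∑ a ∈ A, w a) :=
        (sum_subset (subset_univ _) fun B _ hB => by
          rw [IncidenceAlgebra.apply_eq_zero_of_not_le (by simpa using hB), zero_smul]).symm
    _ = ∑ D ∈ Aᶜ.powerset, (-1 : ℤ) ^ #D • X ^ ∑ a ∈ D, w a := by
      rw [sum_Icc_eq_sum_powerset_sdiff (subset_univ A), ← compl_eq_univ_sdiff]
      refine sum_congr rfl fun D hD => ?_
      have hdisj : Disjoint A D := disjoint_compl_right.mono_right (mem_powerset.1 hD)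
      rw [IncidenceAlgebra.mu_finset subset_union_left, union_sdiff_cancel_left hdisj,
        sum_union hdisj, Nat.add_sub_cancel_left]
    _ = _ := by simp [prod_sub, prod_pow_eq_pow_sum, zsmul_eq_mul]

theorem mobiusPoly_finset (w : α → ℕ) :
    mobiusPoly (Finset α) (fun S => ∑ a ∈ S, w a) = ∏ a, (2 - (X : ℤ[X]) ^ w a) := by
  calc _ = ∑ A : Finset α, ∏ a ∈ Aᶜ, (1 - (X : ℤ[X]) ^ w a) :=
        sum_congr rfl fun A _ => sum_mu_smul_X_pow_finset w A
    _ = ∏ a, (1 + (1 - X ^ w a)) := by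
      rw [prod_add, powerset_univ]
      simp [compl_eq_univ_sdiff]
    _ = _ := by congr! 1 with a; ring

end BooleanLattice

section FiberClosed

variable {α β : Type*} [Fintype α] [DecidableEq β] {f : α → β}

def fiberClosedOrderIso (hf : Function.Surjective f) (p : Finset α → Prop)
    (hp : ∀ S, p S ↔ ∀ x ∈ S, ∀ y, f x = f y → y ∈ S) : {S // p S} ≃o Finset β where
  toFun S := S.1.image f
  invFun T := ⟨({x | f x ∈ T} : Finset α), (hp _).2 fun x hx y hxy => by simpa [hxy] using hx⟩
  left_inv S := by
    ext x
    simpa using ⟨fun ⟨y, hy, hyx⟩ => (hp _).1 S.2 y hy x hyx, fun hx => ⟨x, hx, rfl⟩⟩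
  right_inv T := by
    ext b
    obtain ⟨x, rfl⟩ := hf b
    simpa using ⟨fun ⟨y, hy, hyx⟩ => hyx ▸ hy, fun hx => ⟨x, hx, rfl⟩⟩
  map_rel_iff' {S S'} := by
    refine ⟨fun h x hx => ?_, fun h => image_subset_image h⟩
    obtain ⟨y, hy, hyx⟩ := mem_image.1 (h (mem_image_of_mem f hx))
    exact (hp _).1 S'.2 y hy x hyx

theorem card_eq_sum_card_fiber_of_fiberClosed {S : Finset α}
    (hS : ∀ x ∈ S, ∀ y, f x = f y → y ∈ S) : #S = ∑ b ∈ S.image f, #{x | f x = b} := by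
  rw [card_eq_sum_card_image f S]
  refine sum_congr rfl fun b hb => congrArg card ?_
  obtain ⟨x, hx, rfl⟩ := mem_image.1 hb
  ext y
  simpa using fun hxy => hS x hx y hxy.symm

end FiberClosed

namespace Equiv.Perm

variable {α : Type*} [DecidableEq α]

open Pointwise in
theorem image_eq_self_iff_sameCycle (σ : Perm α) (S : Finset α) :
    S.image σ = S ↔ ∀ x ∈ S, ∀ y, σ.SameCycle x y → y ∈ S := by
  constructor
  · intro hS x hx y ⟨k, hk⟩
    have hstab : σ ∈ MulAction.stabilizer (Perm α) S := by
      rw [MulAction.mem_stabilizer_iff, smul_finset_def]; exact hS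
    rw [← hk, ← (zpow_mem hstab k : σ ^ k • S = S)]
    exact smul_mem_smul_finset hx
  · intro hS
    refine eq_of_subset_of_card_le (fun y hy => ?_) (card_image_of_injective S σ.injective).ge
    obtain ⟨x, hx, rfl⟩ := mem_image.1 hy
    exact hS x hx _ (SameCycle.refl σ x).apply_right

variable [Fintype α] (σ : Perm α)

/-- The `σ`-orbit of `x`, encoded as the cycle factor through `x`, or as `x` itself when `x` is
fixed. -/
def cycleBlock (x : α) : σ.cycleFactorsFinset ⊕ Function.fixedPoints σ :=
  if h : σ x = x then .inr ⟨x, h⟩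
  else .inl ⟨σ.cycleOf x, cycleOf_mem_cycleFactorsFinset_iff.2 (mem_support.2 h)⟩

def blockSize : σ.cycleFactorsFinset ⊕ Function.fixedPoints σ → ℕ :=
  Sum.elim (fun c => #c.1.support) fun _ => 1

variable {σ}

theorem cycleBlock_eq_inl_iff {x : α} {c : σ.cycleFactorsFinset} :
    σ.cycleBlock x = .inl c ↔ x ∈ c.1.support := by
  obtain ⟨c, hc⟩ := c
  unfold cycleBlock
  split_ifs with hx
  · simpa using fun hxc => mem_support.1 (mem_cycleFactorsFinset_support_le hc hxc) hx
  · simpa [eq_comm] using eq_cycleOf_of_mem_cycleFactorsFinset_iff σ c hc x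

theorem cycleBlock_eq_inr_iff {x : α} {y : Function.fixedPoints σ} :
    σ.cycleBlock x = .inr y ↔ x = y := by
  obtain ⟨y, hy⟩ := y
  unfold cycleBlock
  split_ifs with hx
  · simp [Subtype.ext_iff]
  · simpa using fun hxy : x = y => hx (hxy ▸ hy)

variable (σ)

theorem cycleBlock_surjective : Function.Surjective σ.cycleBlock := by
  rintro (⟨c, hc⟩ | y)
  · obtain ⟨x, hx⟩ := (mem_cycleFactorsFinset_iff.1 hc).1.nonempty_support
    exact ⟨x, cycleBlock_eq_inl_iff.2 hx⟩
  · exact ⟨y, cycleBlock_eq_inr_iff.2 rfl⟩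

theorem cycleBlock_eq_iff {x y : α} : σ.cycleBlock x = σ.cycleBlock y ↔ σ.SameCycle x y := by
  unfold cycleBlock
  split_ifs with hx hy hy
  · simpa [Subtype.ext_iff] using
      ⟨fun h : x = y => h ▸ SameCycle.refl σ x, fun h => h.eq_of_left hx⟩
  · simpa using fun h => hy (h.apply_eq_self_iff.1 hx)
  · simpa using fun h => hx (h.apply_eq_self_iff.2 hy)
  · simpa using
      (sameCycle_iff_cycleOf_eq_of_mem_support (mem_support.2 hx) (mem_support.2 hy)).symm

theorem card_filter_cycleBlock_eq (b : σ.cycleFactorsFinset ⊕ Function.fixedPoints σ) :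
    #{x | σ.cycleBlock x = b} = σ.blockSize b := by
  rcases b with c | y
  · simp [cycleBlock_eq_inl_iff, blockSize, support]
  · simp [cycleBlock_eq_inr_iff, blockSize, filter_eq']

theorem map_blockSize_univ : univ.val.map σ.blockSize = σ.partition.parts := by
  rw [← univ_disjSum_univ, val_disjSum, Multiset.map_disjSum, parts_partition, cycleType_def,
    ← sum_cycleType, ← card_fixedPoints]
  simp only [blockSize, Sum.elim_inl, Sum.elim_inr, Multiset.map_const', card_val, card_univ,
    add_left_inj]
  rw [univ_eq_attach, attach_val]
  exact Multiset.attach_map_val' _ (card ∘ support)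

end Equiv.Perm

/-- Let `σ` be a permutation of `{1,…,n}` whose cycle decomposition
(including fixed points as 1-cycles) has cycle lengths `i₁, …, i_r`.  The subposet of the
Boolean lattice consisting of the `σ`-invariant subsets, ordered by inclusion and ranked by
cardinality, has Möbius polynomial `∏_{j=1}^r (2 - z^{i_j})`. -/
theorem mobiusPoly_boolean_fixed (n r : ℕ) (σ : Equiv.Perm (Fin n)) (i : Fin r → ℕ)
    (hcycles : Multiset.map i (Finset.univ.val : Multiset (Fin r)) =
      σ.cycleType + Multiset.replicate (n - σ.support.card) 1) :
    mobiusPoly {S : Finset (Fin n) // S.image σ = S} (fun S => S.1.card) =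
      ∏ j, (2 - (X : Polynomial ℤ) ^ i j) := by
  have hclosed (S : Finset (Fin n)) :
      S.image σ = S ↔ ∀ x ∈ S, ∀ y, σ.cycleBlock x = σ.cycleBlock y → y ∈ S := by
    simp only [σ.image_eq_self_iff_sameCycle, σ.cycleBlock_eq_iff]
  let e := fiberClosedOrderIso σ.cycleBlock_surjective _ hclosed
  have hrank : (fun S : {S : Finset (Fin n) // S.image σ = S} => #S.1) =
      fun S => ∑ b ∈ e S, σ.blockSize b := funext fun S => by
    rw [card_eq_sum_card_fiber_of_fiberClosed ((hclosed S).1 S.2)]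
    exact sum_congr rfl fun b _ => σ.card_filter_cycleBlock_eq b
  calc _ = mobiusPoly (Finset (σ.cycleFactorsFinset ⊕ Function.fixedPoints σ))
        fun T => ∑ b ∈ T, σ.blockSize b := by
        rw [hrank]; exact mobiusPoly_orderIso e fun T => ∑ b ∈ T, σ.blockSize b
    _ = ∏ b, (2 - X ^ σ.blockSize b) := mobiusPoly_finset _
    _ = (σ.partition.parts.map fun m => 2 - X ^ m).prod := by
        rw [← σ.map_blockSize_univ, Multiset.map_map]; rfl
    _ = ∏ j, (2 - X ^ i j) := by
        rw [Equiv.Perm.parts_partition, Fintype.card_fin, ← hcycles, Multiset.map_map]; rfl
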